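/- arXiv:2412.11454 — 6 statements merged into one kernel-verified Lean document; each statement's English description precedes it below -/
import Mathlib

section
/- Under the SISO discrete-time adaptive law setup, for every t ∈ ℕ the Lyapunov function satisfies the exact decrement identity V(t+1) − V(t) = −(2 − (|k_p| ζ(t)ᵀ Γ ζ(t) + γ ξ(t)²)/m(t)²) · ε(t)²/m(t)². -/
open Matrix BigOperators

/-- SISO discrete-time adaptive law: exact Lyapunov decrement identity
`V(t+1) − V(t) = −(2 − (|k_p| ζᵀΓζ + γ ξ²)/m²) ε²/m²`. -/
theorem siso_discrete_lyapunov_decrement_identity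
    (N : ℕ) (hN : 0 < N)
    (ζ : ℕ → Fin N → ℝ) (ξ : ℕ → ℝ)
    (kp : ℝ) (hkp : kp ≠ 0)
    (θs : Fin N → ℝ)
    (Γ : Matrix (Fin N) (Fin N) ℝ) (hΓ : Γ.PosDef)
    (γ : ℝ) (hγ1 : 0 < γ) (hγ2 : γ < 2)
    (θ : ℕ → Fin N → ℝ) (ρ : ℕ → ℝ)
    (m ε V : ℕ → ℝ)
    (hm : ∀ t, m t = Real.sqrt (1 + (∑ i, ζ t i * ζ t i) + ξ t ^ 2))
    (hε : ∀ t, ε t = kp * (∑ i, (θ t i - θs i) * ζ t i) + (ρ t - kp) * ξ t)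
    (hθ : ∀ t, θ (t + 1) = θ t - (Real.sign kp * ε t / m t ^ 2) • Γ.mulVec (ζ t))
    (hρ : ∀ t, ρ (t + 1) = ρ t - γ * ξ t * ε t / m t ^ 2)
    (hV : ∀ t, V t = |kp| * (∑ i, (θ t i - θs i) * (Γ⁻¹.mulVec (θ t - θs)) i)
        + γ⁻¹ * (ρ t - kp) ^ 2) :
    ∀ t, V (t + 1) - V t =
      -(2 - (|kp| * (∑ i, ζ t i * (Γ.mulVec (ζ t)) i) + γ * ξ t ^ 2) / m t ^ 2)
        * (ε t ^ 2 / m t ^ 2) := by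
  intro t
  -- basic facts
  have hdet : IsUnit Γ.det := isUnit_iff_ne_zero.2 hΓ.det_pos.ne'
  have hsym : Γᵀ = Γ := hΓ.isHermitian
  have hz : (0:ℝ) ≤ ∑ i, ζ t i * ζ t i :=
    Finset.sum_nonneg fun i _ => mul_self_nonneg _
  have h1 : (0:ℝ) < 1 + (∑ i, ζ t i * ζ t i) + ξ t ^ 2 := by positivity
  have hm0 : m t ≠ 0 := by
    rw [hm]; exact (Real.sqrt_pos.2 h1).ne'
  have hm2 : m t ^ 2 = 1 + (∑ i, ζ t i * ζ t i) + ξ t ^ 2 := by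
    rw [hm, Real.sq_sqrt h1.le]
  -- sign facts
  have hsgn : Real.sign kp = 1 ∨ Real.sign kp = -1 := by
    rcases lt_or_gt_of_ne hkp with h | h
    · exact Or.inr (Real.sign_of_neg h)
    · exact Or.inl (Real.sign_of_pos h)
  have hsgn2 : Real.sign kp * Real.sign kp = 1 := by
    rcases hsgn with h | h <;> rw [h] <;> norm_num
  have habs : |kp| * Real.sign kp = kp := by
    rcases lt_or_gt_of_ne hkp with h | h
    · rw [Real.sign_of_neg h, abs_of_neg h]; ring
    · rw [Real.sign_of_pos h, abs_of_pos h]; ring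
  -- abbreviations
  set φ : Fin N → ℝ := θ t - θs with hφ
  set c : ℝ := Real.sign kp * ε t / m t ^ 2 with hc
  set u : Fin N → ℝ := Γ.mulVec (ζ t) with hu
  -- inverse facts
  have hinv1 : Γ⁻¹.mulVec u = ζ t := by
    rw [hu, Matrix.mulVec_mulVec, Matrix.nonsing_inv_mul Γ hdet, Matrix.one_mulVec]
  have hinv2 : Γ.mulVec (Γ⁻¹.mulVec φ) = φ := by
    rw [Matrix.mulVec_mulVec, Matrix.mul_nonsing_inv Γ hdet, Matrix.one_mulVec]
  -- symmetry fact : u ⬝ᵥ Γ⁻¹.mulVec φ = ζ t ⬝ᵥ φ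
  have hsymdot : u ⬝ᵥ Γ⁻¹.mulVec φ = φ ⬝ᵥ ζ t := by
    rw [dotProduct_comm, Matrix.dotProduct_mulVec, ← Matrix.mulVec_transpose,
      hsym, hinv2]
  -- new parameter error
  have hθ1 : θ (t+1) - θs = φ - c • u := by
    rw [hθ t]; ext i; simp [hφ, hu, hc]; ring
  -- expand V(t+1) and V t as dot products
  have hVt1 : V (t+1) = |kp| * ((φ - c • u) ⬝ᵥ Γ⁻¹.mulVec (φ - c • u))
      + γ⁻¹ * (ρ t - kp - γ * ξ t * ε t / m t ^ 2) ^ 2 := by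
    rw [hV (t+1)]
    have e1 : (∑ i, (θ (t+1) i - θs i) * (Γ⁻¹.mulVec (θ (t+1) - θs)) i)
        = (θ (t+1) - θs) ⬝ᵥ Γ⁻¹.mulVec (θ (t+1) - θs) := rfl
    rw [e1, hθ1, hρ t]; ring
  have hVt : V t = |kp| * (φ ⬝ᵥ Γ⁻¹.mulVec φ) + γ⁻¹ * (ρ t - kp) ^ 2 := by
    rw [hV t]; rfl
  have hεt : ε t = kp * (φ ⬝ᵥ ζ t) + (ρ t - kp) * ξ t := by rw [hε t]; rfl
  -- expand the quadratic form
  have hquad : (φ - c • u) ⬝ᵥ Γ⁻¹.mulVec (φ - c • u)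
      = φ ⬝ᵥ Γ⁻¹.mulVec φ - 2 * c * (φ ⬝ᵥ ζ t) + c ^ 2 * (ζ t ⬝ᵥ u) := by
    rw [Matrix.mulVec_sub, Matrix.mulVec_smul, hinv1]
    rw [sub_dotProduct, dotProduct_sub, dotProduct_sub,
      smul_dotProduct, dotProduct_smul, smul_dotProduct,
      dotProduct_smul, hsymdot]
    have : φ ⬝ᵥ (ζ t) = (ζ t) ⬝ᵥ φ := dotProduct_comm _ _
    have h2 : u ⬝ᵥ ζ t = ζ t ⬝ᵥ u := dotProduct_comm _ _
    simp only [smul_eq_mul]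
    rw [this, h2]
    ring_nf
  -- the target sum is ζ ⬝ᵥ u
  have htar : (∑ i, ζ t i * (Γ.mulVec (ζ t)) i) = ζ t ⬝ᵥ u := rfl
  rw [hVt1, hVt, hquad, htar]
  -- now pure scalar algebra
  have hε2 : kp * (φ ⬝ᵥ ζ t) = ε t - (ρ t - kp) * ξ t := by rw [hεt]; ring
  have hs2 : Real.sign kp ^ 2 = 1 := by rw [sq, hsgn2]
  have hcm : |kp| * c = kp * ε t / m t ^ 2 := by
    rw [hc, ← mul_div_assoc, ← mul_assoc, habs]
  have hc2 : |kp| * c ^ 2 = |kp| * ε t ^ 2 / m t ^ 4 := by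
    rw [hc, div_pow, mul_pow, hs2, one_mul]; ring
  set b := φ ⬝ᵥ ζ t
  set g := ζ t ⬝ᵥ u
  set a := φ ⬝ᵥ Γ⁻¹.mulVec φ
  set r := ρ t - kp
  have key : |kp| * (a - 2 * c * b + c ^ 2 * g) + γ⁻¹ * (r - γ * ξ t * ε t / m t ^ 2) ^ 2
      - (|kp| * a + γ⁻¹ * r ^ 2)
      = -(2 - (|kp| * g + γ * ξ t ^ 2) / m t ^ 2) * (ε t ^ 2 / m t ^ 2) := by
    have expand : |kp| * (a - 2 * c * b + c ^ 2 * g) + γ⁻¹ * (r - γ * ξ t * ε t / m t ^ 2) ^ 2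
        - (|kp| * a + γ⁻¹ * r ^ 2)
        = -2 * (|kp| * c) * b + (|kp| * c ^ 2) * g
          + γ⁻¹ * ((r - γ * ξ t * ε t / m t ^ 2) ^ 2 - r ^ 2) := by ring
    rw [expand, hcm, hc2]
    have hρpart : γ⁻¹ * ((r - γ * ξ t * ε t / m t ^ 2) ^ 2 - r ^ 2)
        = -2 * r * ξ t * ε t / m t ^ 2 + γ * ξ t ^ 2 * ε t ^ 2 / m t ^ 4 := by
      field_simp
      ring
    rw [hρpart]
    have hb : kp * b = ε t - r * ξ t := hε2
    have h3 : -2 * (kp * ε t / m t ^ 2) * b = -2 * ε t / m t ^ 2 * (ε t - r * ξ t) := by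
      rw [show -2 * (kp * ε t / m t ^ 2) * b = -2 * ε t / m t ^ 2 * (kp * b) by ring, hb]
    rw [h3]
    field_simp
    ring
  exact key
end

section
/- Under the SISO discrete-time adaptive law setup, if moreover |k_p| · xᵀ Γ x < 2 xᵀ x for all nonzero x ∈ ℝ^N (i.e. Γ < (2/|k_p|) I), then for every t ∈ ℕ, V(t+1) − V(t) ≤ −(2 − max{|k_p| λ_max(Γ), γ}) · ε(t)²/m(t)² ≤ 0, where 2 − max{|k_p| λ_max(Γ), γ} > 0 and λ_max(Γ) denotes the largest eigenvalue of Γ. In particular V is nonincreasing. -/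
/-!
Write `φ = θ - θ*` and `r = ρ - k_p` for the parameter errors. Since `|k_p| sign k_p = k_p`,
one step of the adaptive law changes `V` by exactly
`-2 ε (k_p φᵀζ + r ξ) / m² + (|k_p| ζᵀΓζ + γ ξ²) ε² / m⁴`, and the first term is `-2 ε² / m²`.
The Rayleigh bound `ζᵀΓζ ≤ λ_max ζᵀζ` (from `Γ ≤ λ_max I`) and `m² = 1 + ζᵀζ + ξ²` bound the last
term by `max {|k_p| λ_max, γ} ε² / m²`, and testing `|k_p| xᵀΓx < 2 xᵀx` on a top eigenvector
gives `|k_p| λ_max < 2`.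
-/

open Matrix

lemma Real.abs_mul_sign (r : ℝ) : |r| * Real.sign r = r := by
  rcases lt_trichotomy r 0 with hr | rfl | hr
  · rw [abs_of_neg hr, Real.sign_of_neg hr]; ring
  · rw [Real.sign_zero, mul_zero]
  · rw [abs_of_pos hr, Real.sign_of_pos hr, mul_one]

lemma Real.mul_sign_self (r : ℝ) : r * Real.sign r = |r| := by
  rcases lt_trichotomy r 0 with hr | rfl | hr
  · rw [abs_of_neg hr, Real.sign_of_neg hr]; ring
  · rw [Real.sign_zero, mul_zero, abs_zero]
  · rw [abs_of_pos hr, Real.sign_of_pos hr, mul_one]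

lemma Real.mul_iSup_lt_of_forall_mul_lt {ι : Type*} [Finite ι] {f : ι → ℝ} {c d : ℝ}
    -- `0 < d` covers the empty index, where the supremum is `0`
    (hd : 0 < d) (h : ∀ i, c * f i < d) : c * ⨆ i, f i < d := by
  cases isEmpty_or_nonempty ι
  · rwa [Real.iSup_of_isEmpty, mul_zero]
  · obtain ⟨i, hi⟩ := exists_eq_ciSup_of_finite (f := f)
    exact hi ▸ h i

namespace Matrix

variable {n : Type*} [Fintype n] [DecidableEq n]

lemma IsSymm.dotProduct_inv_mulVec_sub_smul_mulVec {R : Type*} [CommRing R] {A : Matrix n n R}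
    (hA : A.IsSymm) (hdet : IsUnit A.det) (x z : n → R) (c : R) :
    (x - c • A *ᵥ z) ⬝ᵥ A⁻¹ *ᵥ (x - c • A *ᵥ z) =
      x ⬝ᵥ A⁻¹ *ᵥ x - 2 * c * (x ⬝ᵥ z) + c ^ 2 * (z ⬝ᵥ A *ᵥ z) := by
  have hcancel : A⁻¹ *ᵥ A *ᵥ z = z := by
    rw [mulVec_mulVec, nonsing_inv_mul _ hdet, one_mulVec]
  have hcross : (A *ᵥ z) ⬝ᵥ A⁻¹ *ᵥ x = x ⬝ᵥ z := by
    rw [← vecMul_transpose, hA.eq, ← dotProduct_mulVec, mulVec_mulVec, mul_nonsing_inv _ hdet,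
      one_mulVec, dotProduct_comm]
  simp only [mulVec_sub, mulVec_smul, hcancel, sub_dotProduct, dotProduct_sub, smul_dotProduct,
    dotProduct_smul, smul_eq_mul, hcross, dotProduct_comm (A *ᵥ z) z]
  ring

namespace IsHermitian

open scoped MatrixOrder

variable {A : Matrix n n ℝ} (hA : A.IsHermitian)
include hA

lemma le_algebraMap_iSup_eigenvalues : A ≤ algebraMap ℝ _ (⨆ i, hA.eigenvalues i) := by
  refine le_algebraMap_of_spectrum_le ?_ hA.isSelfAdjoint
  rw [hA.spectrum_real_eq_range_eigenvalues]
  rintro _ ⟨i, rfl⟩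
  exact le_ciSup (Set.finite_range _).bddAbove i

lemma dotProduct_mulVec_le_iSup_eigenvalues_mul (x : n → ℝ) :
    x ⬝ᵥ A *ᵥ x ≤ (⨆ i, hA.eigenvalues i) * (x ⬝ᵥ x) := by
  have h := (le_iff.mp hA.le_algebraMap_iSup_eigenvalues).dotProduct_mulVec_nonneg x
  rw [Algebra.algebraMap_eq_smul_one, sub_mulVec, smul_mulVec, one_mulVec, star_trivial,
    dotProduct_sub, dotProduct_smul, smul_eq_mul] at h
  linarith

lemma mul_eigenvalues_lt {c d : ℝ} (h : ∀ x ≠ 0, c * (x ⬝ᵥ A *ᵥ x) < d * (x ⬝ᵥ x)) (i : n) :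
    c * hA.eigenvalues i < d := by
  set v := (hA.eigenvectorBasis i).ofLp
  have hv : v ≠ 0 := by simpa [v] using hA.eigenvectorBasis.orthonormal.ne_zero i
  have hpos : 0 < v ⬝ᵥ v := by simpa using dotProduct_star_self_pos_iff.mpr hv
  have := h v hv
  rw [hA.mulVec_eigenvectorBasis, dotProduct_smul, smul_eq_mul, ← mul_assoc] at this
  exact lt_of_mul_lt_mul_right this hpos.le

end IsHermitian

end Matrix

section AdaptiveLaw

variable {n : Type*} [Fintype n] [DecidableEq n]

/-- `φ` and `r` stand for the parameter errors `θ - θ*` and `ρ - k_p`. -/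
noncomputable def adaptiveLyapunov (kp γ : ℝ) (Γ : Matrix n n ℝ) (φ : n → ℝ) (r : ℝ) : ℝ :=
  |kp| * (φ ⬝ᵥ Γ⁻¹ *ᵥ φ) + γ⁻¹ * r ^ 2

lemma adaptiveLyapunov_update_sub {kp γ : ℝ} {Γ : Matrix n n ℝ} (hΓ : Γ.IsSymm)
    (hdet : IsUnit Γ.det) (hγ : γ ≠ 0) (φ z : n → ℝ) (r ξ ε μ : ℝ) :
    adaptiveLyapunov kp γ Γ (φ - (Real.sign kp * ε / μ) • Γ *ᵥ z) (r - γ * ξ * ε / μ) -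
        adaptiveLyapunov kp γ Γ φ r =
      -2 * ε * (kp * (φ ⬝ᵥ z) + r * ξ) / μ + (|kp| * (z ⬝ᵥ Γ *ᵥ z) + γ * ξ ^ 2) * (ε / μ) ^ 2 := by
  have hsign : |kp| * Real.sign kp ^ 2 = |kp| := by
    rw [sq, ← mul_assoc, Real.abs_mul_sign, Real.mul_sign_self]
  unfold adaptiveLyapunov
  rw [hΓ.dotProduct_inv_mulVec_sub_smul_mulVec hdet]
  linear_combination (-2 * ε * (φ ⬝ᵥ z) / μ) * Real.abs_mul_sign kp
    + (ε / μ) ^ 2 * (z ⬝ᵥ Γ *ᵥ z) * hsign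
    + (-2 * r * ξ * ε / μ + γ * ξ ^ 2 * (ε / μ) ^ 2) * inv_mul_cancel₀ hγ

lemma adaptiveLyapunov_update_sub_le {kp γ M μ ε : ℝ} {Γ : Matrix n n ℝ} (hΓ : Γ.IsSymm)
    (hdet : IsUnit Γ.det) (hγ : γ ≠ 0) {φ z : n → ℝ} {r ξ : ℝ}
    (hε : ε = kp * (φ ⬝ᵥ z) + r * ξ) (hμ : 0 < μ)
    (hQ : |kp| * (z ⬝ᵥ Γ *ᵥ z) + γ * ξ ^ 2 ≤ M * μ) :
    adaptiveLyapunov kp γ Γ (φ - (Real.sign kp * ε / μ) • Γ *ᵥ z) (r - γ * ξ * ε / μ) -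
        adaptiveLyapunov kp γ Γ φ r ≤ -(2 - M) * (ε ^ 2 / μ) := by
  rw [adaptiveLyapunov_update_sub hΓ hdet hγ, ← hε]
  calc -2 * ε * ε / μ + (|kp| * (z ⬝ᵥ Γ *ᵥ z) + γ * ξ ^ 2) * (ε / μ) ^ 2
      ≤ -2 * ε * ε / μ + M * μ * (ε / μ) ^ 2 := by gcongr
    _ = -(2 - M) * (ε ^ 2 / μ) := by field_simp; ring

lemma abs_mul_dotProduct_mulVec_add_mul_sq_le {A : Matrix n n ℝ} (hA : A.IsHermitian) {γ : ℝ}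
    (hγ : 0 ≤ γ) (kp : ℝ) (z : n → ℝ) (ξ : ℝ) :
    |kp| * (z ⬝ᵥ A *ᵥ z) + γ * ξ ^ 2 ≤
      max (|kp| * ⨆ i, hA.eigenvalues i) γ * (1 + z ⬝ᵥ z + ξ ^ 2) := by
  have hray := hA.dotProduct_mulVec_le_iSup_eigenvalues_mul z
  have hzz : 0 ≤ z ⬝ᵥ z := by simpa using dotProduct_star_self_nonneg z
  have h1 := le_max_left (|kp| * ⨆ i, hA.eigenvalues i) γ
  have h2 := le_max_right (|kp| * ⨆ i, hA.eigenvalues i) γ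
  nlinarith [abs_nonneg kp, sq_nonneg ξ]

end AdaptiveLaw

theorem siso_discrete_lyapunov_decrement_bound_general
    (N : ℕ)
    (ζ : ℕ → Fin N → ℝ) (ξ : ℕ → ℝ)
    (kp : ℝ)
    (θs : Fin N → ℝ)
    (Γ : Matrix (Fin N) (Fin N) ℝ) (hΓ : Γ.PosDef)
    (hΓ2 : ∀ x : Fin N → ℝ, x ≠ 0 →
      |kp| * (∑ i, x i * (Γ.mulVec x) i) < 2 * ∑ i, x i * x i)
    (γ : ℝ) (hγ1 : 0 < γ) (hγ2 : γ < 2)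
    (θ : ℕ → Fin N → ℝ) (ρ : ℕ → ℝ)
    (m ε V : ℕ → ℝ)
    (hm : ∀ t, m t = Real.sqrt (1 + (∑ i, ζ t i * ζ t i) + ξ t ^ 2))
    (hε : ∀ t, ε t = kp * (∑ i, (θ t i - θs i) * ζ t i) + (ρ t - kp) * ξ t)
    (hθ : ∀ t, θ (t + 1) = θ t - (Real.sign kp * ε t / m t ^ 2) • Γ.mulVec (ζ t))
    (hρ : ∀ t, ρ (t + 1) = ρ t - γ * ξ t * ε t / m t ^ 2)
    (hV : ∀ t, V t = |kp| * (∑ i, (θ t i - θs i) * (Γ⁻¹.mulVec (θ t - θs)) i)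
        + γ⁻¹ * (ρ t - kp) ^ 2) :
    0 < 2 - max (|kp| * ⨆ i, hΓ.1.eigenvalues i) γ ∧
    (∀ t, V (t + 1) - V t ≤
        -(2 - max (|kp| * ⨆ i, hΓ.1.eigenvalues i) γ) * (ε t ^ 2 / m t ^ 2) ∧
      -(2 - max (|kp| * ⨆ i, hΓ.1.eigenvalues i) γ) * (ε t ^ 2 / m t ^ 2) ≤ 0) ∧
    ∀ t, V (t + 1) ≤ V t := by
  set M := max (|kp| * ⨆ i, hΓ.1.eigenvalues i) γ
  have hM : M < 2 :=
    max_lt (Real.mul_iSup_lt_of_forall_mul_lt two_pos (hΓ.1.mul_eigenvalues_lt hΓ2)) hγ2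
  have hsymm : Γ.IsSymm := (conjTranspose_eq_transpose_of_trivial Γ).symm.trans hΓ.1
  have hdet : IsUnit Γ.det := (isUnit_iff_isUnit_det Γ).mp hΓ.isUnit
  have hstep (t : ℕ) : V (t + 1) - V t ≤ -(2 - M) * (ε t ^ 2 / m t ^ 2) := by
    have hζ : 0 ≤ ζ t ⬝ᵥ ζ t := by simpa using dotProduct_star_self_nonneg (ζ t)
    have hm2 : m t ^ 2 = 1 + ζ t ⬝ᵥ ζ t + ξ t ^ 2 := by
      rw [hm]; exact Real.sq_sqrt (by positivity)
    have hθt : θ (t + 1) - θs = (θ t - θs) - (Real.sign kp * ε t / m t ^ 2) • Γ *ᵥ ζ t := by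
      rw [hθ]; exact sub_right_comm _ _ _
    have hρt : ρ (t + 1) - kp = (ρ t - kp) - γ * ξ t * ε t / m t ^ 2 := by
      rw [hρ]; ring
    have hVt (s : ℕ) : V s = adaptiveLyapunov kp γ Γ (θ s - θs) (ρ s - kp) := hV s
    rw [hVt, hVt, hθt, hρt]
    refine adaptiveLyapunov_update_sub_le hsymm hdet hγ1.ne' (hε t) (hm2 ▸ by positivity) ?_
    exact hm2 ▸ abs_mul_dotProduct_mulVec_add_mul_sq_le hΓ.1 hγ1.le kp (ζ t) (ξ t)
  have hnonpos (t : ℕ) : -(2 - M) * (ε t ^ 2 / m t ^ 2) ≤ 0 :=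
    mul_nonpos_of_nonpos_of_nonneg (by linarith) (by positivity)
  exact ⟨by linarith, fun t ↦ ⟨hstep t, hnonpos t⟩, fun t ↦ by linarith [hstep t, hnonpos t]⟩

/-- SISO discrete-time adaptive law: under `Γ < (2/|k_p|) I`, the Lyapunov
decrement satisfies `V(t+1) − V(t) ≤ −(2 − max{|k_p| λ_max(Γ), γ}) ε²/m² ≤ 0`
with `2 − max{|k_p| λ_max(Γ), γ} > 0`; in particular `V` is nonincreasing. -/
theorem siso_discrete_lyapunov_decrement_bound
    (N : ℕ) (hN : 0 < N)
    (ζ : ℕ → Fin N → ℝ) (ξ : ℕ → ℝ)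
    (kp : ℝ) (hkp : kp ≠ 0)
    (θs : Fin N → ℝ)
    (Γ : Matrix (Fin N) (Fin N) ℝ) (hΓ : Γ.PosDef)
    (hΓ2 : ∀ x : Fin N → ℝ, x ≠ 0 →
      |kp| * (∑ i, x i * (Γ.mulVec x) i) < 2 * ∑ i, x i * x i)
    (γ : ℝ) (hγ1 : 0 < γ) (hγ2 : γ < 2)
    (θ : ℕ → Fin N → ℝ) (ρ : ℕ → ℝ)
    (m ε V : ℕ → ℝ)
    (hm : ∀ t, m t = Real.sqrt (1 + (∑ i, ζ t i * ζ t i) + ξ t ^ 2))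
    (hε : ∀ t, ε t = kp * (∑ i, (θ t i - θs i) * ζ t i) + (ρ t - kp) * ξ t)
    (hθ : ∀ t, θ (t + 1) = θ t - (Real.sign kp * ε t / m t ^ 2) • Γ.mulVec (ζ t))
    (hρ : ∀ t, ρ (t + 1) = ρ t - γ * ξ t * ε t / m t ^ 2)
    (hV : ∀ t, V t = |kp| * (∑ i, (θ t i - θs i) * (Γ⁻¹.mulVec (θ t - θs)) i)
        + γ⁻¹ * (ρ t - kp) ^ 2) :
    0 < 2 - max (|kp| * ⨆ i, hΓ.1.eigenvalues i) γ ∧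
    (∀ t, V (t + 1) - V t ≤
        -(2 - max (|kp| * ⨆ i, hΓ.1.eigenvalues i) γ) * (ε t ^ 2 / m t ^ 2) ∧
      -(2 - max (|kp| * ⨆ i, hΓ.1.eigenvalues i) γ) * (ε t ^ 2 / m t ^ 2) ≤ 0) ∧
    ∀ t, V (t + 1) ≤ V t :=
  siso_discrete_lyapunov_decrement_bound_general N ζ ξ kp θs Γ hΓ hΓ2 γ hγ1 hγ2 θ ρ m ε V hm hε hθ
    hρ hV
end

section
/- Let L : (ℕ → ℝ) → (ℕ → ℝ) be an ℝ-linear map on real sequences, applied to vector- and matrix-valued sequences entrywise. Given ω : ℕ → ℝ^N, Θ : ℕ → ℝ^{N×M}, Θ* ∈ ℝ^{N×M}, Ψ : ℕ → ℝ^{M×M}, and K_p ∈ ℝ^{M×M}, define ζ(t) = (L ω)(t) ∈ ℝ^N, ē(t) = K_p (L[s ↦ (Θ(s) − Θ*)ᵀ ω(s)])(t) ∈ ℝ^M, ξ(t) = Θ(t)ᵀ ζ(t) − (L[s ↦ Θ(s)ᵀ ω(s)])(t) ∈ ℝ^M, and ε(t) = ē(t) + Ψ(t) ξ(t). Then for every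 t ∈ ℕ, ε(t) = K_p (Θ(t) − Θ*)ᵀ ζ(t) + (Ψ(t) − K_p) ξ(t). -/
open Matrix BigOperators

/-- The MIMO estimation-error reparametrization identity:
with `ζ = L[ω]` (entrywise), `ē = K_p L[(Θ − Θ*)ᵀ ω]`,
`ξ = Θᵀζ − L[Θᵀω]` and `ε = ē + Ψ ξ`, one has
`ε(t) = K_p (Θ(t) − Θ*)ᵀ ζ(t) + (Ψ(t) − K_p) ξ(t)`. -/
theorem estimation_error_identity_mimo
    (N M : ℕ) (L : (ℕ → ℝ) →ₗ[ℝ] (ℕ → ℝ))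
    (ω : ℕ → Fin N → ℝ)
    (Θ : ℕ → Matrix (Fin N) (Fin M) ℝ) (Θs : Matrix (Fin N) (Fin M) ℝ)
    (Ψ : ℕ → Matrix (Fin M) (Fin M) ℝ) (Kp : Matrix (Fin M) (Fin M) ℝ)
    (ζ : ℕ → Fin N → ℝ) (ebar ξ ε : ℕ → Fin M → ℝ)
    (hζ : ∀ t i, ζ t i = L (fun s => ω s i) t)
    (hebar : ∀ t, ebar t =
      Kp.mulVec (fun j => L (fun s => ((Θ s - Θs)ᵀ.mulVec (ω s)) j) t))
    (hξ : ∀ t, ξ t =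
      (Θ t)ᵀ.mulVec (ζ t) - (fun j => L (fun s => ((Θ s)ᵀ.mulVec (ω s)) j) t))
    (hε : ∀ t, ε t = ebar t + (Ψ t).mulVec (ξ t)) :
    ∀ t, ε t = Kp.mulVec ((Θ t - Θs)ᵀ.mulVec (ζ t)) + (Ψ t - Kp).mulVec (ξ t) := by
  intro t
  have key : (Θs)ᵀ.mulVec (ζ t) = fun j => L (fun s => ((Θs)ᵀ.mulVec (ω s)) j) t := by
    funext j
    simp only [Matrix.mulVec, dotProduct, hζ]
    rw [show (fun s => ∑ i, Θsᵀ j i * ω s i) = ∑ i, Θsᵀ j i • (fun s => ω s i) from by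
      funext s; simp [Finset.sum_apply]]
    simp [map_sum, Finset.sum_apply]
  have hsplit : (fun j => L (fun s => (((Θ s - Θs)ᵀ).mulVec (ω s)) j) t)
      = (fun j => L (fun s => ((Θ s)ᵀ.mulVec (ω s)) j) t) - (Θs)ᵀ.mulVec (ζ t) := by
    funext j
    rw [key]
    have h2 : (fun s => (((Θ s - Θs)ᵀ).mulVec (ω s)) j)
        = (fun s => ((Θ s)ᵀ.mulVec (ω s)) j) - (fun s => ((Θs)ᵀ.mulVec (ω s)) j) := by
      funext s
      simp [Matrix.transpose_sub, Matrix.sub_mulVec]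
    rw [h2, map_sub]
    simp
  rw [hε, hebar, hξ, hsplit]
  simp only [Matrix.transpose_sub, Matrix.sub_mulVec, Matrix.mulVec_sub]
  abel
end

section
/- Under the MIMO continuous-time adaptive law setup, the Lyapunov function V(t) = tr[(Θ(t) − Θ*) Γ_p (Θ(t) − Θ*)ᵀ] + tr[(Ψ(t) − K_p)ᵀ Γ⁻¹ (Ψ(t) − K_p)], with Γ_p = K_pᵀ S_p⁻¹, is differentiable and satisfies dV/dt (t) = −2 ε(t)ᵀ ε(t)/m(t)² ≤ 0 for every t. -/
/-!
With `Θ̃ = Θ - Θ*` and `Ψ̃ = Ψ - K_p`, both summands of `V` have the form `tr (X P Xᵀ)` with `P`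
symmetric (`Γ_p` is symmetric because `K_p S_p` is), so `dV/dt = 2 tr (Θ̃ Γ_p Θ̃'ᵀ) + 2 tr (Ψ̃ᵀ Γ⁻¹ Ψ̃')`.
Substituting the adaptive laws, `Γ_p S_p = K_pᵀ` and `Γ⁻¹ Γ = 1` turn these traces into
`-(2/m²) εᵀ (K_p Θ̃ᵀ ζ)` and `-(2/m²) εᵀ (Ψ̃ ξ)`, whose sum is `-(2/m²) εᵀ ε`.
-/

open Matrix

namespace Matrix

variable {a b : Type*} [Fintype a] [Fintype b]

theorem isSymm_transpose_mul_inv [DecidableEq b] {K S : Matrix b b ℝ} (hKS : (K * S).IsSymm)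
    (hS : IsUnit S.det) : (Kᵀ * S⁻¹).IsSymm := by
  have h : Sᵀ * Kᵀ = K * S := by rw [← transpose_mul]; exact hKS.eq
  rw [IsSymm, transpose_mul, transpose_transpose, transpose_nonsing_inv]
  calc Sᵀ⁻¹ * K = Sᵀ⁻¹ * (K * S * S⁻¹) := by rw [mul_nonsing_inv_cancel_right _ _ hS]
    _ = Sᵀ⁻¹ * (Sᵀ * Kᵀ) * S⁻¹ := by rw [h]; simp only [Matrix.mul_assoc]
    _ = Kᵀ * S⁻¹ := by rw [nonsing_inv_mul_cancel_left _ _ (by rwa [det_transpose])]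

theorem hasDerivAt_trace_mul_mul {A : ℝ → Matrix a b ℝ} {A' : Matrix a b ℝ}
    {B : ℝ → Matrix b a ℝ} {B' : Matrix b a ℝ} {t : ℝ} (C : Matrix b b ℝ)
    (hA : ∀ i j, HasDerivAt (fun s => A s i j) (A' i j) t)
    (hB : ∀ i j, HasDerivAt (fun s => B s i j) (B' i j) t) :
    HasDerivAt (fun s => trace (A s * C * B s))
      (trace (A' * C * B t) + trace (A t * C * B')) t := by
  simp only [trace, diag, mul_apply, Finset.sum_mul, ← Finset.sum_add_distrib]
  exact HasDerivAt.fun_sum fun i _ => HasDerivAt.fun_sum fun j _ =>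
    HasDerivAt.fun_sum fun k _ => ((hA i k).mul_const (C k j)).mul (hB j i)

theorem hasDerivAt_trace_mul_mul_transpose {X : ℝ → Matrix a b ℝ} {X' : Matrix a b ℝ} {t : ℝ}
    {P : Matrix b b ℝ} (hP : P.IsSymm) (hX : ∀ i j, HasDerivAt (fun s => X s i j) (X' i j) t) :
    HasDerivAt (fun s => trace (X s * P * (X s)ᵀ)) (2 * trace (X t * P * X'ᵀ)) t := by
  have h := hasDerivAt_trace_mul_mul (B := fun s => (X s)ᵀ) (B' := X'ᵀ) P hX fun i j => hX j i
  rwa [← trace_transpose (X' * P * (X t)ᵀ), transpose_mul, transpose_mul, transpose_transpose,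
    hP.eq, ← Matrix.mul_assoc, ← two_mul] at h

theorem trace_mul_smul_vecMulVec_mulVec (X : Matrix a b ℝ) (S : Matrix b b ℝ) (c : ℝ)
    (e : b → ℝ) (z : a → ℝ) :
    trace (X * (c • vecMulVec (S *ᵥ e) z)) = c * (e ⬝ᵥ ((X * S)ᵀ *ᵥ z)) := by
  rw [Matrix.mul_smul, trace_smul, smul_eq_mul, mul_vecMulVec, trace_vecMulVec, mulVec_mulVec,
    mulVec_transpose, dotProduct_comm e, ← dotProduct_mulVec, dotProduct_comm]

end Matrix

theorem mimo_continuous_lyapunov_derivative_general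
    (N M : ℕ)
    (ζ : ℝ → Fin N → ℝ) (ξ : ℝ → Fin M → ℝ)
    (m : ℝ → ℝ)
    (Kp Sp : Matrix (Fin M) (Fin M) ℝ) (hSp : IsUnit Sp.det)
    (hKS : (Kp * Sp).PosDef)
    (Γ : Matrix (Fin M) (Fin M) ℝ) (hΓ : Γ.PosDef)
    (Θs : Matrix (Fin N) (Fin M) ℝ)
    (Θ Θ' : ℝ → Matrix (Fin N) (Fin M) ℝ) (Ψ Ψ' : ℝ → Matrix (Fin M) (Fin M) ℝ)
    (hΘd : ∀ t i j, HasDerivAt (fun s => Θ s i j) (Θ' t i j) t)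
    (hΨd : ∀ t i j, HasDerivAt (fun s => Ψ s i j) (Ψ' t i j) t)
    (ε : ℝ → Fin M → ℝ)
    (hε : ∀ t, ε t = Kp.mulVec ((Θ t - Θs)ᵀ.mulVec (ζ t)) + (Ψ t - Kp).mulVec (ξ t))
    (hΘlaw : ∀ t, (Θ' t)ᵀ = -(m t ^ 2)⁻¹ • Matrix.vecMulVec (Sp.mulVec (ε t)) (ζ t))
    (hΨlaw : ∀ t, Ψ' t = -(m t ^ 2)⁻¹ • Matrix.vecMulVec (Γ.mulVec (ε t)) (ξ t))
    (V : ℝ → ℝ)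
    (hV : ∀ t, V t = Matrix.trace ((Θ t - Θs) * (Kpᵀ * Sp⁻¹) * (Θ t - Θs)ᵀ)
        + Matrix.trace ((Ψ t - Kp)ᵀ * Γ⁻¹ * (Ψ t - Kp))) :
    ∀ t, HasDerivAt V (-2 * (∑ j, ε t j * ε t j) / m t ^ 2) t ∧
      -2 * (∑ j, ε t j * ε t j) / m t ^ 2 ≤ 0 := by
  intro t
  have hεε : 0 ≤ ∑ j, ε t j * ε t j := Finset.sum_nonneg fun j _ => mul_self_nonneg _
  refine ⟨?_, div_nonpos_of_nonpos_of_nonneg (by linarith) (sq_nonneg _)⟩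
  have hΘV := hasDerivAt_trace_mul_mul_transpose (X := fun s => Θ s - Θs) (X' := Θ' t)
    (isSymm_transpose_mul_inv (isHermitian_iff_isSymm.mp hKS.isHermitian) hSp)
    fun i j => (hΘd t i j).sub_const (Θs i j)
  have hΨV := hasDerivAt_trace_mul_mul_transpose (X := fun s => (Ψ s - Kp)ᵀ) (X' := (Ψ' t)ᵀ)
    (isHermitian_iff_isSymm.mp hΓ.isHermitian).inv fun i j => (hΨd t j i).sub_const (Kp j i)
  simp only [transpose_transpose] at hΨV
  have hΘtrace : trace ((Θ t - Θs) * (Kpᵀ * Sp⁻¹) * (Θ' t)ᵀ)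
      = -(m t ^ 2)⁻¹ * (ε t ⬝ᵥ (Kp *ᵥ (Θ t - Θs)ᵀ *ᵥ ζ t)) := by
    rw [hΘlaw, trace_mul_smul_vecMulVec_mulVec, ← Matrix.mul_assoc,
      nonsing_inv_mul_cancel_right _ _ hSp, transpose_mul, transpose_transpose, ← mulVec_mulVec]
  have hΨtrace : trace ((Ψ t - Kp)ᵀ * Γ⁻¹ * Ψ' t)
      = -(m t ^ 2)⁻¹ * (ε t ⬝ᵥ (Ψ t - Kp) *ᵥ ξ t) := by
    rw [hΨlaw, trace_mul_smul_vecMulVec_mulVec,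
      nonsing_inv_mul_cancel_right _ _ hΓ.det_pos.ne'.isUnit, transpose_transpose]
  have hεdot : ε t ⬝ᵥ (Kp *ᵥ (Θ t - Θs)ᵀ *ᵥ ζ t) + ε t ⬝ᵥ (Ψ t - Kp) *ᵥ ξ t
      = ∑ j, ε t j * ε t j := by
    rw [← dotProduct_add, ← hε]; rfl
  rw [funext hV]
  refine (hΘV.add hΨV).congr_deriv ?_
  rw [hΘtrace, hΨtrace, div_eq_mul_inv]
  linear_combination (-2 * (m t ^ 2)⁻¹) * hεdot

/-- MIMO continuous-time adaptive laws: the Lyapunov function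
`V = tr[(Θ − Θ*) Γ_p (Θ − Θ*)ᵀ] + tr[(Ψ − K_p)ᵀ Γ⁻¹ (Ψ − K_p)]` with
`Γ_p = K_pᵀ S_p⁻¹` is differentiable with `dV/dt = −2 εᵀε/m² ≤ 0`. -/
theorem mimo_continuous_lyapunov_derivative
    (N M : ℕ) (hN : 0 < N) (hM : 0 < M)
    (ζ : ℝ → Fin N → ℝ) (ξ : ℝ → Fin M → ℝ)
    (hζc : ∀ i, Continuous fun t => ζ t i)
    (hξc : ∀ j, Continuous fun t => ξ t j)
    (m : ℝ → ℝ)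
    (hm : ∀ t, m t = Real.sqrt (1 + (∑ i, ζ t i * ζ t i) + ∑ j, ξ t j * ξ t j))
    (Kp Sp : Matrix (Fin M) (Fin M) ℝ) (hSp : IsUnit Sp.det)
    (hKS : (Kp * Sp).PosDef)
    (Γ : Matrix (Fin M) (Fin M) ℝ) (hΓ : Γ.PosDef)
    (Θs : Matrix (Fin N) (Fin M) ℝ)
    (Θ Θ' : ℝ → Matrix (Fin N) (Fin M) ℝ) (Ψ Ψ' : ℝ → Matrix (Fin M) (Fin M) ℝ)
    (hΘd : ∀ t i j, HasDerivAt (fun s => Θ s i j) (Θ' t i j) t)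
    (hΨd : ∀ t i j, HasDerivAt (fun s => Ψ s i j) (Ψ' t i j) t)
    (ε : ℝ → Fin M → ℝ)
    (hε : ∀ t, ε t = Kp.mulVec ((Θ t - Θs)ᵀ.mulVec (ζ t)) + (Ψ t - Kp).mulVec (ξ t))
    (hΘlaw : ∀ t, (Θ' t)ᵀ = -(m t ^ 2)⁻¹ • Matrix.vecMulVec (Sp.mulVec (ε t)) (ζ t))
    (hΨlaw : ∀ t, Ψ' t = -(m t ^ 2)⁻¹ • Matrix.vecMulVec (Γ.mulVec (ε t)) (ξ t))
    (V : ℝ → ℝ)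
    (hV : ∀ t, V t = Matrix.trace ((Θ t - Θs) * (Kpᵀ * Sp⁻¹) * (Θ t - Θs)ᵀ)
        + Matrix.trace ((Ψ t - Kp)ᵀ * Γ⁻¹ * (Ψ t - Kp))) :
    ∀ t, HasDerivAt V (-2 * (∑ j, ε t j * ε t j) / m t ^ 2) t ∧
      -2 * (∑ j, ε t j * ε t j) / m t ^ 2 ≤ 0 :=
  mimo_continuous_lyapunov_derivative_general N M ζ ξ m Kp Sp hSp hKS Γ hΓ Θs Θ Θ' Ψ Ψ' hΘd hΨd ε hε
    hΘlaw hΨlaw V hV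
end

section
/- Under the MIMO discrete-time adaptive law setup, for every t ∈ ℕ the Lyapunov function satisfies the exact decrement identity V(t+1) − V(t) = −2 ε(t)ᵀε(t)/m(t)² + (ζ(t)ᵀζ(t)/m(t)²)·(ε(t)ᵀ K_p S_p ε(t)/m(t)²) + (ξ(t)ᵀξ(t)/m(t)²)·(ε(t)ᵀ Γ ε(t)/m(t)²). -/
open Matrix BigOperators

section helpers
set_option linter.unusedSectionVars false
variable {l n m p : Type*} [Fintype l] [Fintype n] [Fintype m] [Fintype p]

lemma tvv (u : n → ℝ) (v : m → ℝ) : (vecMulVec u v)ᵀ = vecMulVec v u := by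
  ext i j; simp [vecMulVec_apply, mul_comm]

lemma mvv (A : Matrix l n ℝ) (u : n → ℝ) (v : m → ℝ) :
    A * vecMulVec u v = vecMulVec (A *ᵥ u) v := by
  ext i j; simp [mul_apply, vecMulVec_apply, mulVec, dotProduct, Finset.sum_mul, mul_assoc]

lemma vvm (u : l → ℝ) (v : n → ℝ) (A : Matrix n m ℝ) :
    vecMulVec u v * A = vecMulVec u (v ᵥ* A) := by
  ext i j; simp [mul_apply, vecMulVec_apply, vecMul, dotProduct, Finset.mul_sum, mul_assoc]

lemma trvv (u v : n → ℝ) : Matrix.trace (vecMulVec u v) = u ⬝ᵥ v := by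
  simp [Matrix.trace, Matrix.diag, vecMulVec_apply, dotProduct]

lemma vvmvv (u : l → ℝ) (v w : n → ℝ) (x : m → ℝ) :
    vecMulVec u v * vecMulVec w x = (v ⬝ᵥ w) • vecMulVec u x := by
  ext i j
  simp [mul_apply, vecMulVec_apply, dotProduct, Finset.sum_mul]
  exact Finset.sum_congr rfl (fun k _ => by ring)

lemma dmul (A : Matrix n m ℝ) (u : n → ℝ) (v : m → ℝ) :
    (A *ᵥ v) ⬝ᵥ u = v ⬝ᵥ (Aᵀ *ᵥ u) := by
  rw [dotProduct_comm, dotProduct_mulVec, ← mulVec_transpose, dotProduct_comm]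
end helpers

/-- MIMO discrete-time adaptive laws: exact Lyapunov decrement identity
`V(t+1) − V(t) = −2 εᵀε/m² + (ζᵀζ/m²)(εᵀ K_p S_p ε/m²) + (ξᵀξ/m²)(εᵀ Γ ε/m²)`. -/
theorem mimo_discrete_lyapunov_decrement_identity
    (N M : ℕ) (hN : 0 < N) (hM : 0 < M)
    (ζ : ℕ → Fin N → ℝ) (ξ : ℕ → Fin M → ℝ)
    (m : ℕ → ℝ)
    (hm : ∀ t, m t = Real.sqrt (1 + (∑ i, ζ t i * ζ t i) + ∑ j, ξ t j * ξ t j))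
    (Kp Sp : Matrix (Fin M) (Fin M) ℝ) (hSp : IsUnit Sp.det)
    (hKS : (Kp * Sp).PosDef)
    (hKS2 : ∀ x : Fin M → ℝ, x ≠ 0 →
      (∑ i, x i * ((Kp * Sp).mulVec x) i) < 2 * ∑ i, x i * x i)
    (Γ : Matrix (Fin M) (Fin M) ℝ) (hΓ : Γ.PosDef)
    (hΓ2 : ∀ x : Fin M → ℝ, x ≠ 0 →
      (∑ i, x i * (Γ.mulVec x) i) < 2 * ∑ i, x i * x i)
    (Θs : Matrix (Fin N) (Fin M) ℝ)
    (Θ : ℕ → Matrix (Fin N) (Fin M) ℝ) (Ψ : ℕ → Matrix (Fin M) (Fin M) ℝ)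
    (ε : ℕ → Fin M → ℝ)
    (hε : ∀ t, ε t = Kp.mulVec ((Θ t - Θs)ᵀ.mulVec (ζ t)) + (Ψ t - Kp).mulVec (ξ t))
    (hΘlaw : ∀ t, (Θ (t + 1))ᵀ =
      (Θ t)ᵀ - (m t ^ 2)⁻¹ • Matrix.vecMulVec (Sp.mulVec (ε t)) (ζ t))
    (hΨlaw : ∀ t, Ψ (t + 1) =
      Ψ t - (m t ^ 2)⁻¹ • Matrix.vecMulVec (Γ.mulVec (ε t)) (ξ t))
    (V : ℕ → ℝ)
    (hV : ∀ t, V t = Matrix.trace ((Θ t - Θs) * (Kpᵀ * Sp⁻¹) * (Θ t - Θs)ᵀ)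
        + Matrix.trace ((Ψ t - Kp)ᵀ * Γ⁻¹ * (Ψ t - Kp))) :
    ∀ t, V (t + 1) - V t =
      -2 * (∑ j, ε t j * ε t j) / m t ^ 2
      + ((∑ i, ζ t i * ζ t i) / m t ^ 2)
          * ((∑ j, ε t j * ((Kp * Sp).mulVec (ε t)) j) / m t ^ 2)
      + ((∑ j, ξ t j * ξ t j) / m t ^ 2)
          * ((∑ j, ε t j * (Γ.mulVec (ε t)) j) / m t ^ 2) := by
  intro t
  set c : ℝ := (m t ^ 2)⁻¹ with hc
  set e : Fin M → ℝ := ε t with he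
  set z : Fin N → ℝ := ζ t with hz
  set x : Fin M → ℝ := ξ t with hx
  set Φ : Matrix (Fin N) (Fin M) ℝ := Θ t - Θs with hΦ
  set F : Matrix (Fin M) (Fin M) ℝ := Ψ t - Kp with hF
  set A : Matrix (Fin M) (Fin M) ℝ := Kpᵀ * Sp⁻¹ with hA
  -- symmetry facts
  have hKSsym : (Kp * Sp)ᵀ = Kp * Sp := by
    rw [← Matrix.conjTranspose_eq_transpose_of_trivial]; exact hKS.1
  have hΓsym : Γᵀ = Γ := by
    rw [← Matrix.conjTranspose_eq_transpose_of_trivial]; exact hΓ.1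
  have hΓd : IsUnit Γ.det := isUnit_iff_ne_zero.mpr hΓ.det_pos.ne'
  have hAS : A * Sp = Kpᵀ := by
    rw [hA, Matrix.mul_assoc, Matrix.nonsing_inv_mul _ hSp, Matrix.mul_one]
  have hSpA : Aᵀ * Sp = Kpᵀ := by
    have h1 : Spᵀ * A = Kp := by
      rw [hA, ← Matrix.mul_assoc, ← Matrix.transpose_mul, hKSsym,
        Matrix.mul_assoc, Matrix.mul_nonsing_inv _ hSp, Matrix.mul_one]
    have h2 := congrArg Matrix.transpose h1
    rwa [Matrix.transpose_mul, Matrix.transpose_transpose] at h2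
  -- update laws rewritten
  have hΦ1 : Θ (t + 1) - Θs = Φ - c • vecMulVec z (Sp *ᵥ e) := by
    have h := congrArg Matrix.transpose (hΘlaw t)
    rw [Matrix.transpose_transpose, Matrix.transpose_sub, Matrix.transpose_transpose,
      Matrix.transpose_smul, tvv] at h
    rw [h, hΦ, sub_right_comm]
  have hΦ1T : (Θ (t + 1) - Θs)ᵀ = Φᵀ - c • vecMulVec (Sp *ᵥ e) z := by
    rw [hΦ1, Matrix.transpose_sub, Matrix.transpose_smul, tvv]
  have hF1 : Ψ (t + 1) - Kp = F - c • vecMulVec (Γ *ᵥ e) x := by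
    rw [hΨlaw t, hF, sub_right_comm]
  have hF1T : (Ψ (t + 1) - Kp)ᵀ = Fᵀ - c • vecMulVec x (Γ *ᵥ e) := by
    rw [hF1, Matrix.transpose_sub, Matrix.transpose_smul, tvv]
  -- key vector simplifications
  have hAu : A *ᵥ (Sp *ᵥ e) = Kpᵀ *ᵥ e := by rw [Matrix.mulVec_mulVec, hAS]
  have huA : (Sp *ᵥ e) ᵥ* A = Kpᵀ *ᵥ e := by
    rw [← Matrix.vecMul_transpose, Matrix.vecMul_vecMul, ← Matrix.mulVec_transpose,
      Matrix.transpose_mul, Matrix.transpose_transpose, hSpA]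
  have hGv : Γ⁻¹ *ᵥ (Γ *ᵥ e) = e := by
    rw [Matrix.mulVec_mulVec, Matrix.nonsing_inv_mul _ hΓd, Matrix.one_mulVec]
  have hvG : (Γ *ᵥ e) ᵥ* Γ⁻¹ = e := by
    rw [← Matrix.mulVec_transpose, Matrix.transpose_nonsing_inv, hΓsym, hGv]
  -- scalar identities
  have hs1 : (Φ *ᵥ (Kpᵀ *ᵥ e)) ⬝ᵥ z = e ⬝ᵥ (Kp *ᵥ (Φᵀ *ᵥ z)) := by
    rw [dmul, dmul, Matrix.transpose_transpose]
  have hq1 : (Kpᵀ *ᵥ e) ⬝ᵥ (Sp *ᵥ e) = e ⬝ᵥ ((Kp * Sp) *ᵥ e) := by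
    rw [dmul, Matrix.transpose_transpose, Matrix.mulVec_mulVec]
  have hs2 : (Fᵀ *ᵥ e) ⬝ᵥ x = e ⬝ᵥ (F *ᵥ x) := by
    rw [dmul, Matrix.transpose_transpose]
  -- matrix-level simplifications
  have m1 : Φ * A * vecMulVec (Sp *ᵥ e) z = vecMulVec (Φ *ᵥ (Kpᵀ *ᵥ e)) z := by
    rw [Matrix.mul_assoc, mvv, hAu, mvv]
  have m2 : vecMulVec z (Sp *ᵥ e) * A * Φᵀ = vecMulVec z (Φ *ᵥ (Kpᵀ *ᵥ e)) := by
    rw [vvm, huA, vvm, Matrix.vecMul_transpose]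
  have m3 : vecMulVec z (Sp *ᵥ e) * A * vecMulVec (Sp *ᵥ e) z
      = ((Kpᵀ *ᵥ e) ⬝ᵥ (Sp *ᵥ e)) • vecMulVec z z := by
    rw [vvm, huA, vvmvv]
  have n1 : Fᵀ * Γ⁻¹ * vecMulVec (Γ *ᵥ e) x = vecMulVec (Fᵀ *ᵥ e) x := by
    rw [Matrix.mul_assoc, mvv, hGv, mvv]
  have n2 : vecMulVec x (Γ *ᵥ e) * Γ⁻¹ * F = vecMulVec x (Fᵀ *ᵥ e) := by
    rw [vvm, hvG, vvm, ← Matrix.mulVec_transpose]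
  have n3 : vecMulVec x (Γ *ᵥ e) * Γ⁻¹ * vecMulVec (Γ *ᵥ e) x
      = (e ⬝ᵥ (Γ *ᵥ e)) • vecMulVec x x := by
    rw [vvm, hvG, vvmvv]
  have hs1' : z ⬝ᵥ (Φ *ᵥ (Kpᵀ *ᵥ e)) = e ⬝ᵥ (Kp *ᵥ (Φᵀ *ᵥ z)) := by
    rw [dotProduct_comm]; exact hs1
  have hs2' : x ⬝ᵥ (Fᵀ *ᵥ e) = e ⬝ᵥ (F *ᵥ x) := by
    rw [dotProduct_comm]; exact hs2
  -- first trace difference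
  have h1 : Matrix.trace ((Θ (t+1) - Θs) * A * (Θ (t+1) - Θs)ᵀ)
      - Matrix.trace (Φ * A * Φᵀ)
      = -(2 * c * (e ⬝ᵥ (Kp *ᵥ (Φᵀ *ᵥ z))))
        + c * c * ((e ⬝ᵥ ((Kp * Sp) *ᵥ e)) * (z ⬝ᵥ z)) := by
    rw [hΦ1T, hΦ1]
    simp only [Matrix.sub_mul, Matrix.mul_sub, Matrix.smul_mul, Matrix.mul_smul, smul_smul,
      m1, m2, m3, Matrix.trace_sub, Matrix.trace_smul, trvv, smul_eq_mul, hs1, hs1', hq1]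
    ring
  -- second trace difference
  have h2 : Matrix.trace ((Ψ (t+1) - Kp)ᵀ * Γ⁻¹ * (Ψ (t+1) - Kp))
      - Matrix.trace (Fᵀ * Γ⁻¹ * F)
      = -(2 * c * (e ⬝ᵥ (F *ᵥ x)))
        + c * c * ((e ⬝ᵥ (Γ *ᵥ e)) * (x ⬝ᵥ x)) := by
    rw [hF1T, hF1]
    simp only [Matrix.sub_mul, Matrix.mul_sub, Matrix.smul_mul, Matrix.mul_smul, smul_smul,
      n1, n2, n3, Matrix.trace_sub, Matrix.trace_smul, trvv, smul_eq_mul, hs2, hs2']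
    ring
  -- decomposition of ε
  have hεd : e ⬝ᵥ e = e ⬝ᵥ (Kp *ᵥ (Φᵀ *ᵥ z)) + e ⬝ᵥ (F *ᵥ x) := by
    have h := hε t
    calc e ⬝ᵥ e = e ⬝ᵥ (Kp *ᵥ (Φᵀ *ᵥ z) + F *ᵥ x) := by rw [← h]
    _ = _ := dotProduct_add _ _ _
  -- assemble
  have d1 : (∑ j, e j * e j) = e ⬝ᵥ e := rfl
  have d2 : (∑ i, z i * z i) = z ⬝ᵥ z := rfl
  have d3 : (∑ j, x j * x j) = x ⬝ᵥ x := rfl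
  have d4 : (∑ j, e j * ((Kp * Sp) *ᵥ e) j) = e ⬝ᵥ ((Kp * Sp) *ᵥ e) := rfl
  have d5 : (∑ j, e j * (Γ *ᵥ e) j) = e ⬝ᵥ (Γ *ᵥ e) := rfl
  rw [hV (t+1), hV t, d1, d2, d3, d4, d5, div_eq_mul_inv, div_eq_mul_inv, div_eq_mul_inv,
    div_eq_mul_inv, div_eq_mul_inv, ← hc, hεd]
  linear_combination h1 + h2
end

section
/- Under the MIMO discrete-time adaptive law setup, the parameter increments are square-summable: ∑_{t=0}^{∞} ‖Θ(t+1) − Θ(t)‖² < ∞ and ∑_{t=0}^{∞} ‖Ψ(t+1) − Ψ(t)‖² < ∞ in the Frobenius norm (i.e. Θ(t+1) − Θ(t) ∈ L² and Ψ(t+1) − Ψ(t) ∈ L²). -/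
/-!
With `Θ̃ = Θ - Θ*`, `Ψ̃ = Ψ - Kp` and `P = Sp⁻ᵀ (Kp Sp) Sp⁻¹`, the function
`V = tr (Θ̃ P Θ̃ᵀ) + tr (Ψ̃ᵀ Γ⁻¹ Ψ̃)` is nonnegative, and since `Spᵀ P = Kp` the cross terms of
`V(t+1) - V(t)` add up to `-2 |ε|² / m²`. The quadratic terms are at most
`c |ε|² (|ζ|² + |ξ|²) / m⁴` with `c < 2`, by compactness of the unit sphere, and
`|ζ|² + |ξ|² ≤ m²`. Hence `V` decreases by at least `(2 - c) |ε|² / m²`, so `|ε|² / m²` is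
summable, and each increment is rank one with squared Frobenius norm at most a constant times
`|ε|² / m²`.
-/

open Matrix

namespace Matrix

variable {l m n R : Type*} [Fintype l] [Fintype m] [Fintype n]

theorem dotProduct_self_nonneg [Ring R] [LinearOrder R] [IsStrictOrderedRing R] (v : n → R) :
    0 ≤ v ⬝ᵥ v :=
  Fintype.sum_nonneg fun i => mul_self_nonneg (v i)

theorem dotProduct_mulVec_self_le (G : Matrix m n ℝ) (e : n → ℝ) :
    (G *ᵥ e) ⬝ᵥ (G *ᵥ e) ≤ (∑ i, ∑ j, G i j ^ 2) * (e ⬝ᵥ e) :=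
  calc (G *ᵥ e) ⬝ᵥ (G *ᵥ e) = ∑ i, (∑ j, G i j * e j) ^ 2 := by simp [dotProduct, mulVec, sq]
    _ ≤ ∑ i, (∑ j, G i j ^ 2) * ∑ j, e j ^ 2 :=
      Finset.sum_le_sum fun i _ => Finset.sum_mul_sq_le_sq_mul_sq _ _ _
    _ = (∑ i, ∑ j, G i j ^ 2) * (e ⬝ᵥ e) := by simp [← Finset.sum_mul, dotProduct, sq]

theorem sum_sq_smul_vecMulVec (a : ℝ) (v : m → ℝ) (x : n → ℝ) :
    ∑ i, ∑ j, (a • vecMulVec v x) i j ^ 2 = a ^ 2 * (v ⬝ᵥ v) * (x ⬝ᵥ x) := by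
  simp only [smul_apply, vecMulVec_apply, smul_eq_mul, dotProduct]
  rw [mul_assoc, Fintype.sum_mul_sum]
  simp only [Finset.mul_sum]
  exact Finset.sum_congr rfl fun i _ => Finset.sum_congr rfl fun j _ => by ring

theorem sum_sq_sub_le_of_eq_sub_smul_vecMulVec {A A' : Matrix m n ℝ} {G : Matrix m l ℝ}
    {e : l → ℝ} {x : n → ℝ} {a : ℝ} (h : A' = A - a • vecMulVec (G *ᵥ e) x) (ha : 0 ≤ a)
    (hx : a * (x ⬝ᵥ x) ≤ 1) :
    ∑ i, ∑ j, (A' i j - A i j) ^ 2 ≤ (∑ i, ∑ j, G i j ^ 2) * (a * (e ⬝ᵥ e)) := by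
  have hA : ∀ i j, (A' i j - A i j) ^ 2 = (a • vecMulVec (G *ᵥ e) x) i j ^ 2 := fun i j => by
    rw [h, sub_apply, sub_sub_cancel_left, neg_sq]
  simp only [hA, sum_sq_smul_vecMulVec]
  calc a ^ 2 * ((G *ᵥ e) ⬝ᵥ (G *ᵥ e)) * (x ⬝ᵥ x)
      = a * ((G *ᵥ e) ⬝ᵥ (G *ᵥ e)) * (a * (x ⬝ᵥ x)) := by ring
    _ ≤ a * ((G *ᵥ e) ⬝ᵥ (G *ᵥ e)) :=
      mul_le_of_le_one_right (mul_nonneg ha (dotProduct_self_nonneg _)) hx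
    _ ≤ a * ((∑ i, ∑ j, G i j ^ 2) * (e ⬝ᵥ e)) :=
      mul_le_mul_of_nonneg_left (dotProduct_mulVec_self_le G e) ha
    _ = (∑ i, ∑ j, G i j ^ 2) * (a * (e ⬝ᵥ e)) := by ring

theorem trace_transpose_mul_mul_sub_smul_vecMulVec [CommRing R] {P : Matrix m m R}
    (hP : P.IsSymm) (A : Matrix m n R) (v : m → R) (x : n → R) (a : R) :
    trace ((A - a • vecMulVec v x)ᵀ * P * (A - a • vecMulVec v x)) =
      trace (Aᵀ * P * A) - 2 * a * (v ⬝ᵥ P *ᵥ (A *ᵥ x)) + a ^ 2 * (v ⬝ᵥ P *ᵥ v) * (x ⬝ᵥ x) := by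
  have cross : trace (Aᵀ * P * vecMulVec v x) = v ⬝ᵥ P *ᵥ (A *ᵥ x) := by
    rw [mul_vecMulVec, trace_vecMulVec, ← mulVec_mulVec, mulVec_transpose, ← dotProduct_mulVec]
    nth_rw 1 [← hP.eq]
    rw [mulVec_transpose, ← dotProduct_mulVec]
  have cross' : trace ((vecMulVec v x)ᵀ * P * A) = v ⬝ᵥ P *ᵥ (A *ᵥ x) := by
    rw [← trace_transpose, transpose_mul, transpose_mul, transpose_transpose, hP.eq,
      ← Matrix.mul_assoc, cross]
  have quad : trace ((vecMulVec v x)ᵀ * P * vecMulVec v x) = (v ⬝ᵥ P *ᵥ v) * (x ⬝ᵥ x) := by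
    rw [transpose_vecMulVec, Matrix.mul_assoc, mul_vecMulVec, vecMulVec_mul_vecMulVec,
      trace_vecMulVec, dotProduct_smul, smul_eq_mul]
  simp only [transpose_sub, transpose_smul, Matrix.sub_mul, Matrix.mul_sub, Matrix.smul_mul,
    Matrix.mul_smul, trace_sub, trace_smul, smul_eq_mul, cross, cross', quad]
  ring

theorem trace_transpose_mul_mul_sub_smul_vecMulVec_mulVec [CommRing R] {P : Matrix m m R}
    (hP : P.IsSymm) {G : Matrix m l R} {K : Matrix l m R} (hGP : Gᵀ * P = K)
    (A : Matrix m n R) (e : l → R) (x : n → R) (a : R) :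
    trace ((A - a • vecMulVec (G *ᵥ e) x)ᵀ * P * (A - a • vecMulVec (G *ᵥ e) x)) =
      trace (Aᵀ * P * A) - 2 * a * (e ⬝ᵥ K *ᵥ (A *ᵥ x)) +
        a ^ 2 * (e ⬝ᵥ (K * G) *ᵥ e) * (x ⬝ᵥ x) := by
  have hGe : ∀ w, (G *ᵥ e) ⬝ᵥ P *ᵥ w = e ⬝ᵥ (K *ᵥ w) := fun w => by
    rw [← vecMul_transpose, ← dotProduct_mulVec, mulVec_mulVec, hGP]
  rw [trace_transpose_mul_mul_sub_smul_vecMulVec hP, hGe, hGe, mulVec_mulVec e K G]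

theorem trace_transpose_mul_mul_nonneg {P : Matrix m m ℝ} (hP : P.PosSemidef)
    (A : Matrix m n ℝ) : 0 ≤ trace (Aᵀ * P * A) := by
  simpa [conjTranspose_eq_transpose_of_trivial] using
    (hP.conjTranspose_mul_mul_same A).trace_nonneg

theorem exists_posSemidef_transpose_mul_eq [DecidableEq m] {K S : Matrix m m ℝ}
    (hS : IsUnit S.det) (hKS : (K * S).PosDef) :
    ∃ P : Matrix m m ℝ, P.PosSemidef ∧ Sᵀ * P = K := by
  refine ⟨(S⁻¹)ᵀ * (K * S) * S⁻¹, ?_, ?_⟩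
  · simpa [conjTranspose_eq_transpose_of_trivial] using
      hKS.posSemidef.conjTranspose_mul_mul_same S⁻¹
  · rw [← Matrix.mul_assoc, ← Matrix.mul_assoc, ← transpose_mul, nonsing_inv_mul _ hS,
      transpose_one, Matrix.one_mul, Matrix.mul_assoc, mul_nonsing_inv _ hS, Matrix.mul_one]

theorem exists_lt_forall_dotProduct_mulVec_le (A : Matrix n n ℝ) {r : ℝ}
    (h : ∀ x ≠ 0, x ⬝ᵥ A *ᵥ x < r * (x ⬝ᵥ x)) :
    ∃ c < r, ∀ x, x ⬝ᵥ A *ᵥ x ≤ c * (x ⬝ᵥ x) := by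
  rcases isEmpty_or_nonempty n with hn | hn
  · exact ⟨r - 1, by linarith, fun x => by simp [dotProduct]⟩
  have hpos : ∀ x : n → ℝ, x ≠ 0 → 0 < x ⬝ᵥ x := fun x hx =>
    (dotProduct_self_nonneg x).lt_of_ne' (dotProduct_self_eq_zero.not.2 hx)
  set q : (n → ℝ) → ℝ := fun x => x ⬝ᵥ A *ᵥ x / (x ⬝ᵥ x)
  have hq_smul : ∀ (t : ℝ) x, t ≠ 0 → q (t • x) = q x := by
    intro t x ht
    simp only [q, mulVec_smul, dotProduct_smul, smul_dotProduct, smul_eq_mul]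
    rw [← mul_assoc, ← mul_assoc, mul_div_mul_left _ _ (mul_ne_zero ht ht)]
  have hq_cont : ContinuousOn q (Metric.sphere 0 1) :=
    ContinuousOn.div (by fun_prop) (by fun_prop) fun x hx =>
      (hpos x (ne_zero_of_mem_sphere one_ne_zero ⟨x, hx⟩)).ne'
  obtain ⟨z, hz, hmax⟩ := (isCompact_sphere (0 : n → ℝ) 1).exists_isMaxOn
    (NormedSpace.sphere_nonempty.2 zero_le_one) hq_cont
  have hz0 : z ≠ 0 := ne_zero_of_mem_sphere one_ne_zero ⟨z, hz⟩
  refine ⟨q z, (div_lt_iff₀ (hpos z hz0)).2 (h z hz0), fun x => ?_⟩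
  rcases eq_or_ne x 0 with rfl | hx
  · simp
  have hx_sphere : ‖x‖⁻¹ • x ∈ Metric.sphere (0 : n → ℝ) 1 := by simp [norm_smul, hx]
  have hqx := isMaxOn_iff.1 hmax _ hx_sphere
  rw [hq_smul _ _ (inv_ne_zero (norm_ne_zero_iff.2 hx))] at hqx
  rwa [div_le_iff₀ (hpos x hx)] at hqx

end Matrix

theorem summable_of_le_sub_succ {f V : ℕ → ℝ} (hf : ∀ t, 0 ≤ f t) (hV : ∀ t, 0 ≤ V t)
    (h : ∀ t, f t ≤ V t - V (t + 1)) : Summable f :=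
  summable_of_sum_range_le hf fun n =>
    calc ∑ t ∈ Finset.range n, f t ≤ ∑ t ∈ Finset.range n, (V t - V (t + 1)) :=
          Finset.sum_le_sum fun t _ => h t
      _ = V 0 - V n := Finset.sum_range_sub' V n
      _ ≤ V 0 := sub_le_self _ (hV n)

section AdaptiveLaw

variable {m n : Type*} [Fintype m] [Fintype n] [DecidableEq m]

theorem adaptive_lyapunov_descent {P Q Kp Sp Γ : Matrix m m ℝ} (hP : P.IsSymm)
    (hQ : Q.IsSymm) (hSpP : Spᵀ * P = Kp) (hΓQ : Γᵀ * Q = 1) {c : ℝ} (hc : 0 ≤ c)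
    (hKS : ∀ e, e ⬝ᵥ (Kp * Sp) *ᵥ e ≤ c * (e ⬝ᵥ e)) (hΓ : ∀ e, e ⬝ᵥ Γ *ᵥ e ≤ c * (e ⬝ᵥ e))
    (U : Matrix m n ℝ) (W : Matrix m m ℝ) (z : n → ℝ) (y : m → ℝ) {a : ℝ} (ha : 0 ≤ a)
    (hzy : a * (z ⬝ᵥ z + y ⬝ᵥ y) ≤ 1) {e : m → ℝ} (he : e = Kp *ᵥ (U *ᵥ z) + W *ᵥ y) :
    trace ((U - a • vecMulVec (Sp *ᵥ e) z)ᵀ * P * (U - a • vecMulVec (Sp *ᵥ e) z)) +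
        trace ((W - a • vecMulVec (Γ *ᵥ e) y)ᵀ * Q * (W - a • vecMulVec (Γ *ᵥ e) y)) ≤
      trace (Uᵀ * P * U) + trace (Wᵀ * Q * W) - (2 - c) * (a * (e ⬝ᵥ e)) := by
  rw [trace_transpose_mul_mul_sub_smul_vecMulVec_mulVec hP hSpP,
    trace_transpose_mul_mul_sub_smul_vecMulVec_mulVec hQ hΓQ, Matrix.one_mul, one_mulVec]
  have hcross : e ⬝ᵥ Kp *ᵥ (U *ᵥ z) + e ⬝ᵥ W *ᵥ y = e ⬝ᵥ e := by
    rw [← dotProduct_add, ← he]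
  have hquad : (e ⬝ᵥ (Kp * Sp) *ᵥ e) * (z ⬝ᵥ z) + (e ⬝ᵥ Γ *ᵥ e) * (y ⬝ᵥ y) ≤
      c * (e ⬝ᵥ e) * (z ⬝ᵥ z + y ⬝ᵥ y) := by
    linarith [mul_le_mul_of_nonneg_right (hKS e) (dotProduct_self_nonneg z),
      mul_le_mul_of_nonneg_right (hΓ e) (dotProduct_self_nonneg y)]
  have hcorr : a ^ 2 * ((e ⬝ᵥ (Kp * Sp) *ᵥ e) * (z ⬝ᵥ z) + (e ⬝ᵥ Γ *ᵥ e) * (y ⬝ᵥ y)) ≤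
      c * (a * (e ⬝ᵥ e)) :=
    calc _ ≤ a ^ 2 * (c * (e ⬝ᵥ e) * (z ⬝ᵥ z + y ⬝ᵥ y)) := by gcongr
      _ = c * (a * (e ⬝ᵥ e)) * (a * (z ⬝ᵥ z + y ⬝ᵥ y)) := by ring
      _ ≤ c * (a * (e ⬝ᵥ e)) :=
        mul_le_of_le_one_right (by have := dotProduct_self_nonneg e; positivity) hzy
  linear_combination hcorr - 2 * a * hcross

theorem summable_mul_dotProduct_self_of_adaptive_law {Kp Sp Γ : Matrix m m ℝ}
    (hSp : IsUnit Sp.det) (hKS : (Kp * Sp).PosDef) (hΓ : Γ.PosDef)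
    (hKS2 : ∀ x ≠ 0, x ⬝ᵥ (Kp * Sp) *ᵥ x < 2 * (x ⬝ᵥ x))
    (hΓ2 : ∀ x ≠ 0, x ⬝ᵥ Γ *ᵥ x < 2 * (x ⬝ᵥ x))
    {U : ℕ → Matrix m n ℝ} {W : ℕ → Matrix m m ℝ} {z : ℕ → n → ℝ} {y : ℕ → m → ℝ}
    {a : ℕ → ℝ} {e : ℕ → m → ℝ} (ha : ∀ t, 0 ≤ a t)
    (hzy : ∀ t, a t * (z t ⬝ᵥ z t + y t ⬝ᵥ y t) ≤ 1)
    (he : ∀ t, e t = Kp *ᵥ (U t *ᵥ z t) + W t *ᵥ y t)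
    (hU : ∀ t, U (t + 1) = U t - a t • vecMulVec (Sp *ᵥ e t) (z t))
    (hW : ∀ t, W (t + 1) = W t - a t • vecMulVec (Γ *ᵥ e t) (y t)) :
    Summable fun t => a t * (e t ⬝ᵥ e t) := by
  obtain ⟨P, hP, hSpP⟩ := exists_posSemidef_transpose_mul_eq hSp hKS
  obtain ⟨Q, hQ, hΓQ⟩ :=
    exists_posSemidef_transpose_mul_eq hΓ.det_pos.ne'.isUnit (by rwa [Matrix.one_mul])
  obtain ⟨c, hc0, hc2, hcKS, hcΓ⟩ : ∃ c, 0 ≤ c ∧ c < 2 ∧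
      (∀ e, e ⬝ᵥ (Kp * Sp) *ᵥ e ≤ c * (e ⬝ᵥ e)) ∧ ∀ e, e ⬝ᵥ Γ *ᵥ e ≤ c * (e ⬝ᵥ e) := by
    obtain ⟨c₁, hc₁, h₁⟩ := exists_lt_forall_dotProduct_mulVec_le (Kp * Sp) hKS2
    obtain ⟨c₂, hc₂, h₂⟩ := exists_lt_forall_dotProduct_mulVec_le Γ hΓ2
    refine ⟨max (max c₁ c₂) 0, le_max_right _ _, by simp [hc₁, hc₂],
      fun e => (h₁ e).trans ?_, fun e => (h₂ e).trans ?_⟩ <;>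
    exact mul_le_mul_of_nonneg_right (by simp) (dotProduct_self_nonneg e)
  set V : ℕ → ℝ := fun t => trace ((U t)ᵀ * P * U t) + trace ((W t)ᵀ * Q * W t)
  have hV : ∀ t, 0 ≤ V t := fun t =>
    add_nonneg (trace_transpose_mul_mul_nonneg hP _) (trace_transpose_mul_mul_nonneg hQ _)
  have hdescent : ∀ t, (2 - c) * (a t * (e t ⬝ᵥ e t)) ≤ V t - V (t + 1) := fun t => by
    have := adaptive_lyapunov_descent (isHermitian_iff_isSymm.1 hP.isHermitian)
      (isHermitian_iff_isSymm.1 hQ.isHermitian) hSpP hΓQ hc0 hcKS hcΓ _ _ _ _ (ha t) (hzy t)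
      (he t)
    simp only [V, hU t, hW t]
    linarith
  refine (summable_mul_left_iff (by linarith : 2 - c ≠ 0)).1 <|
    summable_of_le_sub_succ (fun t => ?_) hV hdescent
  exact mul_nonneg (by linarith) (mul_nonneg (ha t) (dotProduct_self_nonneg _))

end AdaptiveLaw

theorem mimo_discrete_adaptive_law_increments_L2_general
    (N M : ℕ)
    (ζ : ℕ → Fin N → ℝ) (ξ : ℕ → Fin M → ℝ)
    (m : ℕ → ℝ)
    (hm : ∀ t, m t = Real.sqrt (1 + (∑ i, ζ t i * ζ t i) + ∑ j, ξ t j * ξ t j))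
    (Kp Sp : Matrix (Fin M) (Fin M) ℝ) (hSp : IsUnit Sp.det)
    (hKS : (Kp * Sp).PosDef)
    (hKS2 : ∀ x : Fin M → ℝ, x ≠ 0 →
      (∑ i, x i * ((Kp * Sp).mulVec x) i) < 2 * ∑ i, x i * x i)
    (Γ : Matrix (Fin M) (Fin M) ℝ) (hΓ : Γ.PosDef)
    (hΓ2 : ∀ x : Fin M → ℝ, x ≠ 0 →
      (∑ i, x i * (Γ.mulVec x) i) < 2 * ∑ i, x i * x i)
    (Θs : Matrix (Fin N) (Fin M) ℝ)
    (Θ : ℕ → Matrix (Fin N) (Fin M) ℝ) (Ψ : ℕ → Matrix (Fin M) (Fin M) ℝ)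
    (ε : ℕ → Fin M → ℝ)
    (hε : ∀ t, ε t = Kp.mulVec ((Θ t - Θs)ᵀ.mulVec (ζ t)) + (Ψ t - Kp).mulVec (ξ t))
    (hΘlaw : ∀ t, (Θ (t + 1))ᵀ =
      (Θ t)ᵀ - (m t ^ 2)⁻¹ • Matrix.vecMulVec (Sp.mulVec (ε t)) (ζ t))
    (hΨlaw : ∀ t, Ψ (t + 1) =
      Ψ t - (m t ^ 2)⁻¹ • Matrix.vecMulVec (Γ.mulVec (ε t)) (ξ t)) :
    Summable (fun t => ∑ i, ∑ j, (Θ (t + 1) i j - Θ t i j) ^ 2) ∧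
    Summable (fun t => ∑ i, ∑ j, (Ψ (t + 1) i j - Ψ t i j) ^ 2) := by
  have ha : ∀ t, 0 ≤ (m t ^ 2)⁻¹ := fun t => inv_nonneg.2 (sq_nonneg _)
  have hnorm : ∀ t, (m t ^ 2)⁻¹ * (ζ t ⬝ᵥ ζ t + ξ t ⬝ᵥ ξ t) ≤ 1 := fun t => by
    have hζ := dotProduct_self_nonneg (ζ t)
    have hξ := dotProduct_self_nonneg (ξ t)
    have hm2 : m t ^ 2 = 1 + ζ t ⬝ᵥ ζ t + ξ t ⬝ᵥ ξ t := by
      rw [hm t]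
      exact Real.sq_sqrt (add_nonneg (add_nonneg zero_le_one hζ) hξ)
    rw [hm2, inv_mul_le_one₀ (by positivity)]
    linarith
  have hs : Summable fun t => (m t ^ 2)⁻¹ * (ε t ⬝ᵥ ε t) :=
    summable_mul_dotProduct_self_of_adaptive_law (U := fun t => (Θ t - Θs)ᵀ)
      (W := fun t => Ψ t - Kp) hSp hKS hΓ hKS2 hΓ2 ha hnorm hε
      (fun t => by rw [transpose_sub, transpose_sub, hΘlaw t, sub_right_comm])
      (fun t => by rw [hΨlaw t, sub_right_comm])
  constructor
  · refine Summable.of_nonneg_of_le (fun t => by positivity) (fun t => ?_)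
      (hs.mul_left (∑ i, ∑ j, Sp i j ^ 2))
    rw [Finset.sum_comm]
    exact sum_sq_sub_le_of_eq_sub_smul_vecMulVec (hΘlaw t) (ha t) <|
      (mul_le_mul_of_nonneg_left (le_add_of_nonneg_right (dotProduct_self_nonneg _)) (ha t)).trans
        (hnorm t)
  · refine Summable.of_nonneg_of_le (fun t => by positivity) (fun t => ?_)
      (hs.mul_left (∑ i, ∑ j, Γ i j ^ 2))
    exact sum_sq_sub_le_of_eq_sub_smul_vecMulVec (hΨlaw t) (ha t) <|
      (mul_le_mul_of_nonneg_left (le_add_of_nonneg_left (dotProduct_self_nonneg _)) (ha t)).trans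
        (hnorm t)

/-- MIMO discrete-time adaptive laws (Lemma 3.1 (iii), discrete-time case):
the parameter increments `Θ(t+1) − Θ(t)` and `Ψ(t+1) − Ψ(t)` are
square-summable in the Frobenius norm. -/
theorem mimo_discrete_adaptive_law_increments_L2
    (N M : ℕ) (hN : 0 < N) (hM : 0 < M)
    (ζ : ℕ → Fin N → ℝ) (ξ : ℕ → Fin M → ℝ)
    (m : ℕ → ℝ)
    (hm : ∀ t, m t = Real.sqrt (1 + (∑ i, ζ t i * ζ t i) + ∑ j, ξ t j * ξ t j))
    (Kp Sp : Matrix (Fin M) (Fin M) ℝ) (hSp : IsUnit Sp.det)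
    (hKS : (Kp * Sp).PosDef)
    (hKS2 : ∀ x : Fin M → ℝ, x ≠ 0 →
      (∑ i, x i * ((Kp * Sp).mulVec x) i) < 2 * ∑ i, x i * x i)
    (Γ : Matrix (Fin M) (Fin M) ℝ) (hΓ : Γ.PosDef)
    (hΓ2 : ∀ x : Fin M → ℝ, x ≠ 0 →
      (∑ i, x i * (Γ.mulVec x) i) < 2 * ∑ i, x i * x i)
    (Θs : Matrix (Fin N) (Fin M) ℝ)
    (Θ : ℕ → Matrix (Fin N) (Fin M) ℝ) (Ψ : ℕ → Matrix (Fin M) (Fin M) ℝ)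
    (ε : ℕ → Fin M → ℝ)
    (hε : ∀ t, ε t = Kp.mulVec ((Θ t - Θs)ᵀ.mulVec (ζ t)) + (Ψ t - Kp).mulVec (ξ t))
    (hΘlaw : ∀ t, (Θ (t + 1))ᵀ =
      (Θ t)ᵀ - (m t ^ 2)⁻¹ • Matrix.vecMulVec (Sp.mulVec (ε t)) (ζ t))
    (hΨlaw : ∀ t, Ψ (t + 1) =
      Ψ t - (m t ^ 2)⁻¹ • Matrix.vecMulVec (Γ.mulVec (ε t)) (ξ t)) :
    Summable (fun t => ∑ i, ∑ j, (Θ (t + 1) i j - Θ t i j) ^ 2) ∧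
    Summable (fun t => ∑ i, ∑ j, (Ψ (t + 1) i j - Ψ t i j) ^ 2) :=
  mimo_discrete_adaptive_law_increments_L2_general N M ζ ξ m hm Kp Sp hSp hKS hKS2 Γ hΓ hΓ2 Θs Θ Ψ ε
    hε hΘlaw hΨlaw
end
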